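/- In the Lorentz mirror model on the cylinder Z × Z/(2n+1) with i.i.d. mirror designations (each vertex gets a mirror with probability p, equally likely NW or NE), the probability that a given fixed vertex lies on an infinite light trajectory is at least 1/(2n+1). -/

import Mathlib

/-- Directions of travel of the light ray. -/
inductive Dir | N | E | S | W
deriving DecidableEq

/-- Mirror designation at a vertex: no mirror, north-west mirror, or north-east mirror. -/
inductive Mirror | no | NW | NE
deriving DecidableEq

/-- Reflection of a direction by a mirror (no mirror: straight). -/
def reflect : Mirror → Dir → Dir
  | .no, d => d
  | .NW, .E => .N
  | .NW, .N => .E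
  | .NW, .W => .S
  | .NW, .S => .W
  | .NE, .E => .S
  | .NE, .S => .E
  | .NE, .W => .N
  | .NE, .N => .W

/-- One step in a direction on the cylinder `ℤ × ZMod m`. -/
def moveC {m : ℕ} (v : ℤ × ZMod m) : Dir → ℤ × ZMod m
  | .N => (v.1, v.2 + 1)
  | .S => (v.1, v.2 - 1)
  | .E => (v.1 + 1, v.2)
  | .W => (v.1 - 1, v.2)

/-- The step map of the mirror model on the cylinder: move one step, then reflect
at the mirror (if any) at the new vertex. -/
def stepC {m : ℕ} (c : ℤ × ZMod m → Mirror) (s : (ℤ × ZMod m) × Dir) :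
    (ℤ × ZMod m) × Dir :=
  (moveC s.1 s.2, reflect (c (moveC s.1 s.2)) s.2)

instance : Fintype Dir := ⟨⟨{.N, .E, .S, .W}, by decide⟩, fun d => by cases d <;> decide⟩
instance : Fintype Mirror := ⟨⟨{.no, .NW, .NE}, by decide⟩, fun x => by cases x <;> decide⟩

def opp : Dir → Dir | .N => .S | .S => .N | .E => .W | .W => .E

lemma opp_ne (d : Dir) : opp d ≠ d := by cases d <;> simp [opp]

lemma reflect_reflect (m : Mirror) (d : Dir) : reflect m (reflect m d) = d := by
  cases m <;> cases d <;> rfl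

lemma reflect_opp_reflect (m : Mirror) (d : Dir) : reflect m (opp (reflect m d)) = opp d := by
  cases m <;> cases d <;> rfl

lemma reflect_ne_opp (m : Mirror) (d : Dir) : reflect m d ≠ opp d := by
  cases m <;> cases d <;> simp [reflect, opp]

lemma moveC_opp {m : ℕ} (v : ℤ × ZMod m) (d : Dir) : moveC (moveC v d) (opp d) = v := by
  cases d <;> simp [moveC, opp]

lemma moveC_inj {m : ℕ} {v w : ℤ × ZMod m} (d : Dir) (h : moveC v d = moveC w d) : v = w := by
  cases d <;> simpa [moveC, Prod.ext_iff] using h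

def revC {m : ℕ} (s : (ℤ × ZMod m) × Dir) : (ℤ × ZMod m) × Dir := (moveC s.1 s.2, opp s.2)

lemma step_rev_step {m : ℕ} (c : ℤ × ZMod m → Mirror) (s : (ℤ × ZMod m) × Dir) :
    stepC c (revC (stepC c s)) = revC s := by
  obtain ⟨v, d⟩ := s
  simp only [stepC, revC, moveC_opp, reflect_opp_reflect]

lemma iter_rev_iter {m : ℕ} (c : ℤ × ZMod m → Mirror) (i : ℕ) (s : (ℤ × ZMod m) × Dir) :
    (stepC c)^[i] (revC ((stepC c)^[i] s)) = revC s := by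
  induction i generalizing s with
  | zero => rfl
  | succ i ih =>
    rw [Function.iterate_succ_apply (stepC c) i, Function.iterate_succ_apply' (stepC c) i s,
      step_rev_step]
    exact ih _

lemma stepC_injective {m : ℕ} (c : ℤ × ZMod m → Mirror) : Function.Injective (stepC c) := by
  rintro ⟨v1, d1⟩ ⟨v2, d2⟩ h
  simp only [stepC, Prod.mk.injEq] at h
  obtain ⟨h1, h2⟩ := h
  rw [← h1] at h2
  have hd : d1 = d2 := by
    have := congrArg (reflect (c (moveC (v1, d1).1 (v1, d1).2))) h2
    rwa [reflect_reflect, reflect_reflect] at this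
  subst hd
  exact Prod.ext (moveC_inj d1 h1) rfl

lemma x_step {m : ℕ} (c : ℤ × ZMod m → Mirror) (s : (ℤ × ZMod m) × Dir) :
    (stepC c s).1.1 = s.1.1 + 1 ∨ (stepC c s).1.1 = s.1.1 - 1 ∨ (stepC c s).1.1 = s.1.1 := by
  obtain ⟨v, d⟩ := s
  cases d <;> simp [stepC, moveC]

lemma x_step_lt {m : ℕ} (c : ℤ × ZMod m → Mirror) (s : (ℤ × ZMod m) × Dir)
    (h : (stepC c s).1.1 < s.1.1) : s.2 = Dir.W ∧ (stepC c s).1.1 = s.1.1 - 1 := by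
  obtain ⟨v, d⟩ := s
  cases d <;> simp [stepC, moveC] at h ⊢ <;> omega

lemma invol_fixed {α : Type*} [Fintype α] (hodd : ¬ 2 ∣ Fintype.card α)
    (σ : α → α) (h : ∀ x, σ (σ x) = x) : ∃ x, σ x = x := by
  classical
  have hinv : Function.Involutive σ := h
  have hσ2 : hinv.toPerm ^ 2 ^ 1 = 1 := by
    ext x
    simp [pow_succ, Function.Involutive.coe_toPerm, h x]
  exact Equiv.Perm.exists_fixed_point_of_prime hodd hσ2

lemma exists_infinite_col (n : ℕ) (c : ℤ × ZMod (2 * n + 1) → Mirror) (x₀ : ℤ) :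
    ∃ y : ZMod (2 * n + 1), Set.Infinite
      (Set.range fun k : ℕ => ((stepC c)^[k] ((x₀, y), Dir.E)).1) := by
  classical
  by_contra hcon
  push_neg at hcon
  set f := stepC c with hf
  set sy : ZMod (2 * n + 1) → (ℤ × ZMod (2 * n + 1)) × Dir :=
    fun y => ((x₀, y), Dir.E) with hsy
  have hiter : ∀ (a b : ℕ) (s : (ℤ × ZMod (2 * n + 1)) × Dir), a + 1 = b →
      f (f^[a] s) = f^[b] s := by
    intro a b s hab
    rw [← hab, Function.iterate_succ_apply']
  -- every eastward start in the column is periodic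
  have hper : ∀ y, ∃ P, 0 < P ∧ f^[P] (sy y) = sy y := by
    intro y
    have hfin : (Set.range fun k : ℕ => f^[k] (sy y)).Finite := by
      apply Set.Finite.subset
        ((hcon y).prod (Set.finite_univ : (Set.univ : Set Dir).Finite))
      rintro s ⟨k, rfl⟩
      exact ⟨⟨k, rfl⟩, Set.mem_univ _⟩
    have hninj : ¬ Function.Injective (fun k : ℕ => f^[k] (sy y)) := by
      intro hinj; exact (Set.infinite_range_of_injective hinj) hfin
    rw [Function.not_injective_iff] at hninj
    obtain ⟨i, j, hij, hne⟩ := hninj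
    rcases hne.lt_or_gt with h | h
    · refine ⟨j - i, by omega, ?_⟩
      refine (stepC_injective c).iterate i ?_
      rw [← Function.iterate_add_apply, show i + (j - i) = j from by omega]
      exact hij.symm
    · refine ⟨i - j, by omega, ?_⟩
      refine (stepC_injective c).iterate j ?_
      rw [← Function.iterate_add_apply, show j + (i - j) = i from by omega]
      exact hij
  -- first-return times
  have hQ : ∀ y, ∃ k, 0 < k ∧ (f^[k] (sy y)).1.1 ≤ x₀ := by
    intro y
    obtain ⟨P, hP, hPe⟩ := hper y
    exact ⟨P, hP, by rw [hPe]⟩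
  set K : ZMod (2 * n + 1) → ℕ := fun y => Nat.find (hQ y) with hKdef
  have hKspec : ∀ y, 0 < K y ∧ (f^[K y] (sy y)).1.1 ≤ x₀ := fun y => Nat.find_spec (hQ y)
  have hKmin : ∀ y, ∀ j, 0 < j → j < K y → x₀ + 1 ≤ (f^[j] (sy y)).1.1 := by
    intro y j hj hjK
    have h := Nat.find_min (hQ y) hjK
    push_neg at h
    have := h hj
    omega
  have hK2 : ∀ y, 2 ≤ K y := by
    intro y
    by_contra h
    push_neg at h
    have h1 : K y = 1 := by have := (hKspec y).1; omega
    have h2 : (f^[1] (sy y)).1.1 = x₀ + 1 := by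
      simp [hsy, hf, stepC, moveC]
    have := (hKspec y).2
    rw [h1] at this
    omega
  -- the state just before first return is a westward crossing
  have hw : ∀ y, ∃ y', f^[K y - 1] (sy y) = ((x₀ + 1, y'), Dir.W) := by
    intro y
    have hK2y := hK2 y
    have h1 : x₀ + 1 ≤ (f^[K y - 1] (sy y)).1.1 := hKmin y (K y - 1) (by omega) (by omega)
    have h2 : (f^[K y] (sy y)).1.1 ≤ x₀ := (hKspec y).2
    rw [← hiter (K y - 1) (K y) (sy y) (by omega)] at h2
    have hlt : (f (f^[K y - 1] (sy y))).1.1 < (f^[K y - 1] (sy y)).1.1 := by omega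
    obtain ⟨hdir, heq⟩ := x_step_lt c _ hlt
    rw [← hf] at heq
    have hx : (f^[K y - 1] (sy y)).1.1 = x₀ + 1 := by omega
    refine ⟨(f^[K y - 1] (sy y)).1.2, ?_⟩
    rw [Prod.ext_iff, Prod.ext_iff]
    exact ⟨⟨hx, rfl⟩, hdir⟩
  choose σ hσ using hw
  -- time reversal
  have hpos : ∀ t : (ℤ × ZMod (2 * n + 1)) × Dir, (revC t).1 = (f t).1 := fun t => rfl
  have hrev0 : ∀ y, sy (σ y) = revC (f^[K y - 1] (sy y)) := by
    intro y
    rw [hσ y]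
    simp [revC, moveC, opp, hsy]
  have hrevi : ∀ y, ∀ i ≤ K y - 1, f^[i] (sy (σ y)) = revC (f^[K y - 1 - i] (sy y)) := by
    intro y i hi
    rw [hrev0 y, show f^[K y - 1] (sy y) = f^[i] (f^[K y - 1 - i] (sy y)) from ?_,
      iter_rev_iter]
    rw [← Function.iterate_add_apply, show i + (K y - 1 - i) = K y - 1 from by omega]
  -- σ is an involution
  have hKσ : ∀ y, K (σ y) = K y ∧ σ (σ y) = y := by
    intro y
    have hK2y := hK2 y
    have hb : ∀ i, 0 < i → i < K y → x₀ + 1 ≤ (f^[i] (sy (σ y))).1.1 := by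
      intro i hi0 hiK
      rcases Nat.lt_or_ge i (K y - 1) with hlt | hge
      · rw [hrevi y i (by omega), hpos,
          hiter (K y - 1 - i) (K y - i) (sy y) (by omega)]
        exact hKmin y (K y - i) (by omega) (by omega)
      · have hieq : i = K y - 1 := by omega
        rw [hieq, hrevi y (K y - 1) le_rfl,
          show K y - 1 - (K y - 1) = 0 from by omega]
        simp [revC, hsy, moveC, opp]
    have hbK : (f^[K y] (sy (σ y))).1.1 ≤ x₀ := by
      rw [← hiter (K y - 1) (K y) (sy (σ y)) (by omega),
        hrevi y (K y - 1) le_rfl, show K y - 1 - (K y - 1) = 0 from by omega]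
      simp [revC, hsy, moveC, opp, hf, stepC]
    have hKle : K (σ y) ≤ K y := Nat.find_le ⟨by omega, hbK⟩
    have hKge : K y ≤ K (σ y) := by
      by_contra h
      push_neg at h
      have hs := hKspec (σ y)
      have := hb (K (σ y)) hs.1 h
      omega
    have hKeq : K (σ y) = K y := le_antisymm hKle hKge
    have h2 : f^[K (σ y) - 1] (sy (σ y)) = ((x₀ + 1, y), Dir.W) := by
      rw [hKeq, hrevi y (K y - 1) le_rfl, show K y - 1 - (K y - 1) = 0 from by omega]
      simp [revC, hsy, moveC, opp]
    have h3 := hσ (σ y)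
    rw [h2] at h3
    exact ⟨hKeq, ((Prod.ext_iff.mp (Prod.ext_iff.mp h3).1).2).symm⟩
  -- a fixed point of σ gives a contradiction
  obtain ⟨y, hy⟩ := invol_fixed (α := ZMod (2 * n + 1))
    (by rw [ZMod.card]; omega) σ (fun y => (hKσ y).2)
  have hrevy : ∀ i ≤ K y - 1, f^[i] (sy y) = revC (f^[K y - 1 - i] (sy y)) := by
    intro i hi
    have h := hrevi y i hi
    rwa [hy] at h
  have hK2y := hK2 y
  rcases Nat.even_or_odd (K y - 1) with ⟨t, ht⟩ | ⟨t, ht⟩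
  · have h := hrevy t (by omega)
    rw [show K y - 1 - t = t from by omega] at h
    have h2 : (f^[t] (sy y)).2 = opp ((f^[t] (sy y)).2) := congrArg Prod.snd h
    exact opp_ne _ h2.symm
  · have h := hrevy (t + 1) (by omega)
    rw [show K y - 1 - (t + 1) = t from by omega, Function.iterate_succ_apply'] at h
    have h2 := congrArg Prod.snd h
    simp only [hf, stepC, revC] at h2
    exact reflect_ne_opp _ _ h2

instance : MeasurableSpace Mirror := ⊤

open MeasureTheory


lemma measSet_iter (n : ℕ) (s t : (ℤ × ZMod (2 * n + 1)) × Dir) (k : ℕ) :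
    MeasurableSet {c : ℤ × ZMod (2 * n + 1) → Mirror | (stepC c)^[k] s = t} := by
  induction k generalizing t with
  | zero =>
    by_cases h : s = t
    · have he : {c : ℤ × ZMod (2 * n + 1) → Mirror | (stepC c)^[0] s = t} = Set.univ := by
        ext c; simp [h]
      rw [he]; exact MeasurableSet.univ
    · have he : {c : ℤ × ZMod (2 * n + 1) → Mirror | (stepC c)^[0] s = t} = ∅ := by
        ext c; simp [h]
      rw [he]; exact MeasurableSet.empty
  | succ k ih =>
    have hdec : {c : ℤ × ZMod (2 * n + 1) → Mirror | (stepC c)^[k + 1] s = t}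
        = ⋃ u : (ℤ × ZMod (2 * n + 1)) × Dir,
          ({c | (stepC c)^[k] s = u} ∩ {c | stepC c u = t}) := by
      ext c
      simp only [Set.mem_setOf_eq, Set.mem_iUnion, Set.mem_inter_iff]
      constructor
      · intro h
        exact ⟨(stepC c)^[k] s, rfl, by rwa [← Function.iterate_succ_apply' (stepC c) k s]⟩
      · rintro ⟨u, h1, h2⟩
        rw [Function.iterate_succ_apply', h1]
        exact h2
    rw [hdec]
    refine MeasurableSet.iUnion fun u => (ih u).inter ?_
    have h2 : {c : ℤ × ZMod (2 * n + 1) → Mirror | stepC c u = t}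
        = (fun c : ℤ × ZMod (2 * n + 1) → Mirror => c (moveC u.1 u.2)) ⁻¹'
          {x | (moveC u.1 u.2, reflect x u.2) = t} := rfl
    rw [h2]
    exact measurable_pi_apply _ trivial

lemma measSet_event (n : ℕ) (v : ℤ × ZMod (2 * n + 1)) :
    MeasurableSet {c : ℤ × ZMod (2 * n + 1) → Mirror |
      ∃ d : Dir, Set.Infinite (Set.range fun k : ℕ => ((stepC c)^[k] (v, d)).1)} := by
  have hsplit : {c : ℤ × ZMod (2 * n + 1) → Mirror |
      ∃ d : Dir, Set.Infinite (Set.range fun k : ℕ => ((stepC c)^[k] (v, d)).1)}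
      = ⋃ d : Dir, {c | Set.Infinite (Set.range fun k : ℕ => ((stepC c)^[k] (v, d)).1)} := by
    ext c; simp
  rw [hsplit]
  refine MeasurableSet.iUnion fun d => ?_
  have hchar : ∀ c : ℤ × ZMod (2 * n + 1) → Mirror,
      Set.Infinite (Set.range fun k : ℕ => ((stepC c)^[k] (v, d)).1)
      ↔ ∀ N : ℕ, ∃ k : ℕ, N ≤ ((stepC c)^[k] (v, d)).1.1.natAbs := by
    intro c
    constructor
    · intro hinf N
      by_contra h
      push_neg at h
      refine hinf ?_
      apply Set.Finite.subset
        ((Set.finite_Icc (-(N : ℤ)) N).prod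
          (Set.finite_univ : (Set.univ : Set (ZMod (2 * n + 1))).Finite))
      rintro u ⟨k, rfl⟩
      have := h k
      constructor
      · simp only [Set.mem_Icc]; omega
      · exact Set.mem_univ _
    · intro h
      intro hfin
      obtain ⟨M, hM⟩ := (hfin.image fun u => u.1.natAbs).bddAbove
      obtain ⟨k, hk⟩ := h (M + 1)
      have : ((stepC c)^[k] (v, d)).1.1.natAbs ≤ M :=
        hM (Set.mem_image_of_mem _ ⟨k, rfl⟩)
      omega
  have hset : {c : ℤ × ZMod (2 * n + 1) → Mirror |
        Set.Infinite (Set.range fun k : ℕ => ((stepC c)^[k] (v, d)).1)}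
      = ⋂ N : ℕ, ⋃ k : ℕ, ⋃ t : {t : (ℤ × ZMod (2 * n + 1)) × Dir // N ≤ t.1.1.natAbs},
          {c | (stepC c)^[k] (v, d) = ↑t} := by
    ext c
    simp only [Set.mem_setOf_eq, hchar c, Set.mem_iInter, Set.mem_iUnion]
    constructor
    · intro h N
      obtain ⟨k, hk⟩ := h N
      exact ⟨k, ⟨(stepC c)^[k] (v, d), hk⟩, rfl⟩
    · intro h N
      obtain ⟨k, t, ht⟩ := h N
      exact ⟨k, by rw [ht]; exact t.2⟩
  rw [hset]
  exact MeasurableSet.iInter fun N => MeasurableSet.iUnion fun k =>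
    MeasurableSet.iUnion fun t => measSet_iter n _ _ k

def rotE (n : ℕ) (a : ZMod (2 * n + 1)) :
    (ℤ × ZMod (2 * n + 1)) ≃ (ℤ × ZMod (2 * n + 1)) :=
  (Equiv.refl ℤ).prodCongr (Equiv.addRight a)

lemma rotE_apply (n : ℕ) (a : ZMod (2 * n + 1)) (v : ℤ × ZMod (2 * n + 1)) :
    rotE n a v = (v.1, v.2 + a) := rfl

lemma moveC_rot (n : ℕ) (a : ZMod (2 * n + 1)) (v : ℤ × ZMod (2 * n + 1)) (d : Dir) :
    moveC (rotE n a v) d = rotE n a (moveC v d) := by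
  cases d <;> simp [moveC, rotE_apply, Prod.ext_iff] <;> ring

lemma iter_conj (n : ℕ) (a : ZMod (2 * n + 1)) (c : ℤ × ZMod (2 * n + 1) → Mirror)
    (k : ℕ) (t : (ℤ × ZMod (2 * n + 1)) × Dir) :
    (stepC c)^[k] (rotE n a t.1, t.2)
      = (rotE n a (((stepC (fun v => c (rotE n a v)))^[k] t).1),
         ((stepC (fun v => c (rotE n a v)))^[k] t).2) := by
  induction k generalizing t with
  | zero => rfl
  | succ k ih =>
    rw [Function.iterate_succ_apply, Function.iterate_succ_apply]
    have hstep : stepC c (rotE n a t.1, t.2)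
        = (rotE n a ((stepC (fun v => c (rotE n a v)) t).1),
           (stepC (fun v => c (rotE n a v)) t).2) := by
      obtain ⟨v, d⟩ := t
      simp only [stepC, moveC_rot]
    rw [hstep]
    exact ih _

/-- Mirror model on the cylinder `ℤ × ZMod (2n+1)` with i.i.d. mirror
designations (no mirror with probability `1-p`, NW and NE mirrors with
probability `p/2` each): the probability that a fixed vertex `v₀` lies on an
infinite light trajectory is at least `1/(2n+1)`. -/
theorem cylinder_vertex_on_infinite_trajectory (n : ℕ) (p : ℝ)
    (hp : 0 < p) (hp1 : p ≤ 1)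
    (μ : Measure ((ℤ × ZMod (2 * n + 1)) → Mirror)) [IsProbabilityMeasure μ]
    (hind : ProbabilityTheory.iIndepFun
      (fun v (c : (ℤ × ZMod (2 * n + 1)) → Mirror) => c v) μ)
    (hno : ∀ v, μ {c | c v = Mirror.no} = ENNReal.ofReal (1 - p))
    (hNW : ∀ v, μ {c | c v = Mirror.NW} = ENNReal.ofReal (p / 2))
    (hNE : ∀ v, μ {c | c v = Mirror.NE} = ENNReal.ofReal (p / 2))
    (v₀ : ℤ × ZMod (2 * n + 1)) :
    1 / (2 * n + 1 : ENNReal) ≤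
      μ {c | ∃ d : Dir,
        Set.Infinite (Set.range fun k : ℕ => ((stepC c)^[k] (v₀, d)).1)} := by
  classical
  set w : Mirror → ENNReal := fun x => match x with
    | Mirror.no => ENNReal.ofReal (1 - p)
    | Mirror.NW => ENNReal.ofReal (p / 2)
    | Mirror.NE => ENNReal.ofReal (p / 2) with hwdef
  have hmarg : ∀ v x, μ {c | c v = x} = w x := by
    intro v x
    cases x
    · exact hno v
    · exact hNW v
    · exact hNE v
  -- measure of an atomic cylinder, with relabeled coordinates
  have hsingle : ∀ (e : (ℤ × ZMod (2 * n + 1)) ≃ (ℤ × ZMod (2 * n + 1)))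
      (s : Finset (ℤ × ZMod (2 * n + 1))) (tt : (ℤ × ZMod (2 * n + 1)) → Mirror),
      μ {c | ∀ v ∈ s, c (e v) = tt v} = ∏ v ∈ s, w (tt v) := by
    intro e s tt
    have hset : {c : (ℤ × ZMod (2 * n + 1)) → Mirror | ∀ v ∈ s, c (e v) = tt v}
        = ⋂ u ∈ s.image e,
          (fun c : (ℤ × ZMod (2 * n + 1)) → Mirror => c u) ⁻¹' {tt (e.symm u)} := by
      ext cc
      simp only [Set.mem_setOf_eq, Set.mem_iInter, Finset.mem_image, Set.mem_preimage,
        Set.mem_singleton_iff]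
      constructor
      · rintro h u ⟨v, hv, rfl⟩
        rw [Equiv.symm_apply_apply]
        exact h v hv
      · intro h v hv
        have := h (e v) ⟨v, hv, rfl⟩
        rwa [Equiv.symm_apply_apply] at this
    rw [hset, hind.meas_biInter (fun u _ => ⟨{tt (e.symm u)}, trivial, rfl⟩)]
    rw [Finset.prod_image (fun a _ b _ h => e.injective h)]
    refine Finset.prod_congr rfl fun v _ => ?_
    rw [Equiv.symm_apply_apply]
    exact hmarg (e v) (tt v)
  -- measure of a general cylinder, with relabeled coordinates
  have hcylmap : ∀ (e : (ℤ × ZMod (2 * n + 1)) ≃ (ℤ × ZMod (2 * n + 1)))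
      (s : Finset (ℤ × ZMod (2 * n + 1))) (T : Set (∀ i : s, Mirror)),
      μ {c | (fun i : s => c (e i)) ∈ T}
        = ∑ t ∈ (Set.toFinite T).toFinset, ∏ v ∈ s,
            w (if h : v ∈ s then t ⟨v, h⟩ else Mirror.no) := by
    intro e s T
    set ext : (∀ i : s, Mirror) → (ℤ × ZMod (2 * n + 1)) → Mirror :=
      fun t v => if h : v ∈ s then t ⟨v, h⟩ else Mirror.no with hext
    have hdec : {c : (ℤ × ZMod (2 * n + 1)) → Mirror | (fun i : s => c (e i)) ∈ T}
        = ⋃ t ∈ (Set.toFinite T).toFinset,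
            {c : (ℤ × ZMod (2 * n + 1)) → Mirror | ∀ v ∈ s, c (e v) = ext t v} := by
      ext cc
      simp only [Set.mem_setOf_eq, Set.mem_iUnion, Set.Finite.mem_toFinset, exists_prop]
      constructor
      · intro h
        refine ⟨fun i => cc (e i), h, fun v hv => ?_⟩
        simp only [hext, dif_pos hv]
      · rintro ⟨t, ht, hall⟩
        have : (fun i : s => cc (e i)) = t := by
          funext i
          have := hall i i.2
          simpa only [hext, dif_pos i.2] using this
        rwa [this]
    rw [hdec, measure_biUnion_finset ?_ ?_]
    · exact Finset.sum_congr rfl fun t _ => hsingle e s (ext t)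
    · -- pairwise disjoint
      intro t1 h1 t2 h2 hne
      refine Set.disjoint_left.mpr fun cc hc1 hc2 => hne ?_
      funext i
      have e1 := hc1 i i.2
      have e2 := hc2 i i.2
      simp only [hext, dif_pos i.2] at e1 e2
      rw [← e1, ← e2]
    · -- measurability
      intro t _
      have : {c : (ℤ × ZMod (2 * n + 1)) → Mirror | ∀ v ∈ s, c (e v) = ext t v}
          = ⋂ v ∈ s, (fun c : (ℤ × ZMod (2 * n + 1)) → Mirror => c (e v)) ⁻¹' {ext t v} := by
        ext cc
        simp [Set.mem_iInter]
      rw [this]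
      exact MeasurableSet.biInter s.countable_toSet
        fun v _ => measurable_pi_apply _ trivial
  -- invariance of μ under rotations
  have hΦmeas : ∀ a : ZMod (2 * n + 1),
      Measurable (fun (c : (ℤ × ZMod (2 * n + 1)) → Mirror) (v : ℤ × ZMod (2 * n + 1)) =>
        c (rotE n a v)) :=
    fun a => measurable_pi_lambda _ fun v => measurable_pi_apply _
  have hmap : ∀ a : ZMod (2 * n + 1),
      μ.map (fun (c : (ℤ × ZMod (2 * n + 1)) → Mirror) v => c (rotE n a v)) = μ := by
    intro a
    haveI : IsProbabilityMeasure
        (μ.map (fun (c : (ℤ × ZMod (2 * n + 1)) → Mirror) v => c (rotE n a v))) :=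
      Measure.isProbabilityMeasure_map (hΦmeas a).aemeasurable
    refine ext_of_generate_finite _ generateFrom_measurableCylinders.symm
      isPiSystem_measurableCylinders ?_ ?_
    · intro S hS
      obtain ⟨s, T, hT, rfl⟩ := (mem_measurableCylinders _).mp hS
      rw [Measure.map_apply (hΦmeas a) hT.cylinder]
      have h1 : (fun (c : (ℤ × ZMod (2 * n + 1)) → Mirror) v => c (rotE n a v)) ⁻¹'
          cylinder s T = {c | (fun i : s => c (rotE n a i)) ∈ T} := rfl
      have h2 : cylinder s T
          = {c : (ℤ × ZMod (2 * n + 1)) → Mirror | (fun i : s => c (Equiv.refl _ i)) ∈ T} := rfl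
      rw [h1, h2, hcylmap (rotE n a) s T, hcylmap (Equiv.refl _) s T]
    · rw [Measure.map_apply (hΦmeas a) MeasurableSet.univ]
      simp
  -- transport of the event by rotation
  set Ev : (ℤ × ZMod (2 * n + 1)) → Set ((ℤ × ZMod (2 * n + 1)) → Mirror) :=
    fun v => {c | ∃ d : Dir,
      Set.Infinite (Set.range fun k : ℕ => ((stepC c)^[k] (v, d)).1)} with hEvdef
  have hEtrans : ∀ (a : ZMod (2 * n + 1)) v,
      (fun (c : (ℤ × ZMod (2 * n + 1)) → Mirror) u => c (rotE n a u)) ⁻¹' Ev v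
        = Ev (rotE n a v) := by
    intro a v
    ext cc
    simp only [hEvdef, Set.mem_preimage, Set.mem_setOf_eq]
    have hr : ∀ d : Dir, (Set.range fun k : ℕ => ((stepC cc)^[k] (rotE n a v, d)).1)
        = rotE n a '' (Set.range fun k : ℕ =>
            ((stepC (fun u => cc (rotE n a u)))^[k] (v, d)).1) := by
      intro d
      ext u
      simp only [Set.mem_range, Set.mem_image]
      constructor
      · rintro ⟨k, rfl⟩
        exact ⟨_, ⟨k, rfl⟩, (congrArg Prod.fst (iter_conj n a cc k (v, d))).symm⟩
      · rintro ⟨x, ⟨k, rfl⟩, rfl⟩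
        exact ⟨k, congrArg Prod.fst (iter_conj n a cc k (v, d))⟩
    constructor
    · rintro ⟨d, hd⟩
      refine ⟨d, ?_⟩
      rw [hr d]
      exact hd.image ((rotE n a).injective.injOn)
    · rintro ⟨d, hd⟩
      rw [hr d] at hd
      exact ⟨d, hd.of_image _⟩
  -- coverage
  have hcover : (⋃ a : ZMod (2 * n + 1), Ev (rotE n a v₀)) = Set.univ := by
    ext cc
    simp only [Set.mem_iUnion, Set.mem_univ, iff_true]
    obtain ⟨y, hy⟩ := exists_infinite_col n cc v₀.1
    refine ⟨y - v₀.2, Dir.E, ?_⟩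
    have hrv : rotE n (y - v₀.2) v₀ = (v₀.1, y) := by
      rw [rotE_apply]
      exact Prod.ext rfl (by ring)
    rw [hrv]
    exact hy
  -- putting it together
  have hmeasEv : ∀ v, MeasurableSet (Ev v) := fun v => measSet_event n v
  have heach : ∀ a : ZMod (2 * n + 1), μ (Ev (rotE n a v₀)) = μ (Ev v₀) := by
    intro a
    rw [← hEtrans a v₀, ← Measure.map_apply (hΦmeas a) (hmeasEv v₀), hmap a]
  have hle : (1 : ENNReal) ≤ ∑ a : ZMod (2 * n + 1), μ (Ev (rotE n a v₀)) := by
    calc (1 : ENNReal) = μ Set.univ := measure_univ.symm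
    _ = μ (⋃ a : ZMod (2 * n + 1), Ev (rotE n a v₀)) := by rw [hcover]
    _ ≤ ∑ a : ZMod (2 * n + 1), μ (Ev (rotE n a v₀)) := measure_iUnion_fintype_le μ _
  rw [Finset.sum_congr rfl (fun a _ => heach a), Finset.sum_const, Finset.card_univ,
    ZMod.card, nsmul_eq_mul] at hle
  have hgoal : μ {c | ∃ d : Dir,
      Set.Infinite (Set.range fun k : ℕ => ((stepC c)^[k] (v₀, d)).1)} = μ (Ev v₀) := rfl
  rw [hgoal,
    show (2 * (n : ENNReal) + 1) = ((2 * n + 1 : ℕ) : ENNReal) from by push_cast; ring,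
    ENNReal.div_le_iff (Nat.cast_ne_zero.mpr (by omega)) (ENNReal.natCast_ne_top _)]
  calc (1 : ENNReal) ≤ ((2 * n + 1 : ℕ) : ENNReal) * μ (Ev v₀) := hle
  _ = μ (Ev v₀) * ((2 * n + 1 : ℕ) : ENNReal) := mul_comm _ _
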